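/- arXiv:1506.02502 — 5 statements merged into one kernel-verified Lean document; each statement's English description precedes it below -/
import Mathlib

section
/- If f : [0,∞) → ℝ is twice differentiable and v(t, f(t)) = 0 for all t ≥ 0, then for all t ≥ 0 one has f''(t)·∂ₓv(t,f(t)) + f'(t)·( f'(t)·∂ₓ²v(t,f(t)) + ∂ₓ³v(t,f(t)) ) + (1/4)·∂ₓ⁴v(t,f(t)) = 0. -/
open MeasureTheory Real Filter

noncomputable def v (t x : ℝ) : ℂ :=
  (1 / (2 * Real.pi)) *
    ∫ l : ℝ, Complex.exp (Complex.I * l * x - l ^ 2 * t / 2 - l ^ 4 / 4)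

lemma intBound (m : ℕ) (a : ℝ) :
    Integrable (fun l : ℝ => |l| ^ m * Real.exp (a * l ^ 2 - l ^ 4 / 4)) := by
  have hcont : Continuous fun l : ℝ => |l| ^ m * Real.exp (a * l ^ 2 - l ^ 4 / 4) := by
    fun_prop
  refine Integrable.mono' (g := fun l => Real.exp ((m + a + 1) ^ 2) * Real.exp (-(1:ℝ) * l ^ 2))
    ((integrable_exp_neg_mul_sq one_pos).const_mul _) hcont.aestronglyMeasurable ?_
  filter_upwards with l
  rw [Real.norm_eq_abs, _root_.abs_of_nonneg (by positivity)]
  have h1 : |l| ≤ Real.exp (l ^ 2) := by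
    have := Real.add_one_le_exp (l ^ 2)
    nlinarith [abs_nonneg l, _root_.sq_abs l]
  have h2 : |l| ^ m ≤ Real.exp (l ^ 2) ^ m := pow_le_pow_left₀ (abs_nonneg l) h1 m
  rw [← Real.exp_nat_mul] at h2
  calc |l| ^ m * Real.exp (a * l ^ 2 - l ^ 4 / 4)
      ≤ Real.exp ((m : ℝ) * l ^ 2) * Real.exp (a * l ^ 2 - l ^ 4 / 4) := by
        exact mul_le_mul_of_nonneg_right h2 (Real.exp_nonneg _)
    _ = Real.exp (((m : ℝ) + a) * l ^ 2 - l ^ 4 / 4) := by rw [← Real.exp_add]; ring_nf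
    _ ≤ Real.exp ((m + a + 1) ^ 2) * Real.exp (-(1:ℝ) * l ^ 2) := by
        rw [← Real.exp_add]
        apply Real.exp_le_exp.2
        nlinarith [sq_nonneg (l ^ 2 / 2 - ((m : ℝ) + a + 1))]

noncomputable def K (n : ℕ) (l : ℝ) (p : ℝ × ℝ) : ℂ :=
  (Complex.I * l) ^ n *
    Complex.exp (Complex.I * l * p.2 - l ^ 2 * p.1 / 2 - l ^ 4 / 4)

noncomputable def HH (n : ℕ) (p : ℝ × ℝ) : ℂ :=
  (1 / (2 * Real.pi)) * ∫ l : ℝ, K n l p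

lemma norm_K (n : ℕ) (l : ℝ) (p : ℝ × ℝ) :
    ‖K n l p‖ = |l| ^ n * Real.exp (-(l ^ 2 * p.1 / 2) - l ^ 4 / 4) := by
  rw [K, norm_mul, norm_pow, norm_mul, Complex.norm_I, Complex.norm_real,
    Real.norm_eq_abs, one_mul, Complex.norm_exp]
  congr 2
  simp [Complex.div_re, Complex.normSq, Complex.mul_re, Complex.mul_im,
    ← Complex.ofReal_pow]

lemma K_continuous (n : ℕ) (p : ℝ × ℝ) : Continuous (fun l : ℝ => K n l p) := by
  unfold K; fun_prop

noncomputable def LM (c d : ℂ) : ℝ × ℝ →L[ℝ] ℂ :=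
  (ContinuousLinearMap.fst ℝ ℝ ℝ).smulRight c + (ContinuousLinearMap.snd ℝ ℝ ℝ).smulRight d

@[simp] lemma LM_apply (c d : ℂ) (q : ℝ × ℝ) : LM c d q = q.1 • c + q.2 • d := by
  simp [LM]

lemma norm_LM_le (c d : ℂ) : ‖LM c d‖ ≤ ‖c‖ + ‖d‖ := by
  refine (norm_add_le _ _).trans (add_le_add ?_ ?_) <;>
    rw [ContinuousLinearMap.norm_smulRight_apply] <;>
    exact mul_le_of_le_one_left (norm_nonneg _) (by
      simpa using ContinuousLinearMap.norm_fst_le (𝕜 := ℝ) (E := ℝ) (F := ℝ) ▸ le_refl _)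

lemma hasFDerivAt_K (n : ℕ) (l : ℝ) (p : ℝ × ℝ) :
    HasFDerivAt (fun q => K n l q)
      (LM ((1 / 2) * K (n + 2) l p) (K (n + 1) l p)) p := by
  have hz : HasFDerivAt
      (fun q : ℝ × ℝ => Complex.I * l * q.2 - l ^ 2 * q.1 / 2 - l ^ 4 / 4)
      (LM (-(l ^ 2 : ℂ) / 2) (Complex.I * l)) p := by
    have h2 : HasFDerivAt (fun q : ℝ × ℝ => ((q.2 : ℝ) : ℂ))
        (Complex.ofRealCLM.comp (ContinuousLinearMap.snd ℝ ℝ ℝ)) p :=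
      (Complex.ofRealCLM.comp (ContinuousLinearMap.snd ℝ ℝ ℝ)).hasFDerivAt
    have h1 : HasFDerivAt (fun q : ℝ × ℝ => ((q.1 : ℝ) : ℂ))
        (Complex.ofRealCLM.comp (ContinuousLinearMap.fst ℝ ℝ ℝ)) p :=
      (Complex.ofRealCLM.comp (ContinuousLinearMap.fst ℝ ℝ ℝ)).hasFDerivAt
    have := ((h2.const_mul (Complex.I * l)).sub
      ((h1.const_mul ((l ^ 2 : ℂ) / 2)))).sub_const ((l ^ 4 : ℂ) / 4)
    refine (this.congr_fderiv ?_).congr_of_eventuallyEq (Eventually.of_forall fun q => ?_)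
    · ext q <;> simp [LM] <;> ring
    · simp only [Pi.sub_apply]; push_cast; ring
  have hexp := (Complex.hasDerivAt_exp _).comp_hasFDerivAt p hz
  have h := hexp.const_mul ((Complex.I * l) ^ n)
  have hI : (Complex.I * l) ^ 2 = -(l ^ 2 : ℂ) := by
    rw [mul_pow, Complex.I_sq]; ring
  have heq : (Complex.I * l) ^ n •
      Complex.exp (Complex.I * l * p.2 - l ^ 2 * p.1 / 2 - l ^ 4 / 4) •
        LM (-(l ^ 2 : ℂ) / 2) (Complex.I * l)
      = LM ((1 / 2) * K (n + 2) l p) (K (n + 1) l p) := by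
    refine ContinuousLinearMap.ext fun q => ?_
    simp only [ContinuousLinearMap.smul_apply, LM_apply, smul_eq_mul, Complex.real_smul]
    rw [K, K, pow_add, pow_add, hI]
    ring
  exact heq ▸ h

lemma K_norm_le (n : ℕ) {p q : ℝ × ℝ} (h : q ∈ Metric.ball p 1) (l : ℝ) :
    ‖K n l q‖ ≤ |l| ^ n * Real.exp (((|p.1| + 1) / 2) * l ^ 2 - l ^ 4 / 4) := by
  rw [norm_K]
  have h1 : |q.1 - p.1| ≤ dist q p := by
    rw [Prod.dist_eq, ← Real.dist_eq]; exact le_max_left _ _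
  have h2 : dist q p < 1 := Metric.mem_ball.1 h
  refine mul_le_mul_of_nonneg_left (Real.exp_le_exp.2 ?_) (by positivity)
  have h3 : -q.1 ≤ |p.1| + 1 := by
    have := abs_sub_abs_le_abs_sub q.1 p.1
    have := neg_abs_le q.1
    nlinarith [abs_nonneg q.1]
  nlinarith [sq_nonneg l]

lemma K_integrable (n : ℕ) (p : ℝ × ℝ) : Integrable (fun l => K n l p) := by
  refine (intBound n ((|p.1| + 1) / 2)).mono'
    (K_continuous n p).aestronglyMeasurable ?_
  filter_upwards with l
  exact K_norm_le n (Metric.mem_ball_self one_pos) l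

lemma LM_continuous {α : Type*} [TopologicalSpace α] {a b : α → ℂ}
    (ha : Continuous a) (hb : Continuous b) : Continuous fun x => LM (a x) (b x) := by
  unfold LM
  exact (((ContinuousLinearMap.smulRightL ℝ (ℝ × ℝ) ℂ
      (ContinuousLinearMap.fst ℝ ℝ ℝ)).continuous.comp ha).add
    (((ContinuousLinearMap.smulRightL ℝ (ℝ × ℝ) ℂ
      (ContinuousLinearMap.snd ℝ ℝ ℝ)).continuous.comp hb)))

lemma HH_hasFDerivAt (n : ℕ) (p : ℝ × ℝ) :
    HasFDerivAt (HH n) (LM ((1 / 2) * HH (n + 2) p) (HH (n + 1) p)) p := by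
  set a := (|p.1| + 1) / 2 with ha
  have key := hasFDerivAt_integral_of_dominated_of_fderiv_le (μ := volume) (𝕜 := ℝ)
    (F := fun (q : ℝ × ℝ) l => K n l q)
    (F' := fun (q : ℝ × ℝ) l => LM ((1 / 2) * K (n + 2) l q) (K (n + 1) l q))
    (x₀ := p)
    (bound := fun l => (1 / 2) * (|l| ^ (n + 2) * Real.exp (a * l ^ 2 - l ^ 4 / 4))
      + |l| ^ (n + 1) * Real.exp (a * l ^ 2 - l ^ 4 / 4))
    (Metric.ball_mem_nhds p one_pos)
    (Eventually.of_forall fun q => (K_continuous n q).aestronglyMeasurable)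
    (K_integrable n p)
    ((LM_continuous (continuous_const.mul (K_continuous (n + 2) p))
      (K_continuous (n + 1) p)).aestronglyMeasurable)
    ?_ ?_ ?_
  · have hint2 : Integrable (fun l => (1 / 2 : ℂ) * K (n + 2) l p) :=
      (K_integrable (n + 2) p).const_mul _
    have hint1 := K_integrable (n + 1) p
    set A := ContinuousLinearMap.smulRightL ℝ (ℝ × ℝ) ℂ (ContinuousLinearMap.fst ℝ ℝ ℝ) with hA2
    set B := ContinuousLinearMap.smulRightL ℝ (ℝ × ℝ) ℂ (ContinuousLinearMap.snd ℝ ℝ ℝ) with hB2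
    have e : ∀ c d : ℂ, LM c d = A c + B d := fun c d => rfl
    have hsplit : (∫ l, LM ((1 / 2) * K (n + 2) l p) (K (n + 1) l p))
        = LM ((1 / 2) * ∫ l, K (n + 2) l p) (∫ l, K (n + 1) l p) := by
      simp only [e]
      rw [integral_add (A.integrable_comp hint2) (B.integrable_comp hint1),
        A.integral_comp_comm hint2, B.integral_comp_comm hint1, integral_const_mul]
    rw [hsplit] at key
    have final := key.const_mul ((1 : ℂ) / (2 * (Real.pi : ℂ)))
    have heq2 : ((1 : ℂ) / (2 * (Real.pi : ℂ))) •
        LM ((1 / 2) * ∫ l, K (n + 2) l p) (∫ l, K (n + 1) l p)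
        = LM ((1 / 2) * HH (n + 2) p) (HH (n + 1) p) := by
      refine ContinuousLinearMap.ext fun q => ?_
      simp only [ContinuousLinearMap.smul_apply, LM_apply, smul_eq_mul,
        Complex.real_smul, HH]
      ring
    rw [heq2] at final
    exact final
  · filter_upwards with l
    intro q hq
    refine (norm_LM_le _ _).trans ?_
    rw [norm_mul]
    have e1 : ‖(1 / 2 : ℂ)‖ = 1 / 2 := by norm_num
    rw [e1]
    exact add_le_add (by gcongr; exact K_norm_le (n + 2) hq l)
      (K_norm_le (n + 1) hq l)
  · exact (((intBound (n + 2) a).const_mul (1 / 2)).add (intBound (n + 1) a))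
  · filter_upwards with l
    intro q hq
    exact hasFDerivAt_K n l q

lemma v_eq (t x : ℝ) : v t x = HH 0 (t, x) := by
  simp [v, HH, K]

lemma HH_hasDerivAt_x (n : ℕ) (t x : ℝ) :
    HasDerivAt (fun y => HH n (t, y)) (HH (n + 1) (t, x)) x := by
  have hc : HasDerivAt (fun y : ℝ => ((t, y) : ℝ × ℝ)) ((0 : ℝ), (1 : ℝ)) x :=
    (hasDerivAt_const x t).prodMk (hasDerivAt_id x)
  have := (HH_hasFDerivAt n (t, x)).comp_hasDerivAt x hc
  simp at this
  exact this

lemma iter_eq (t : ℝ) (n : ℕ) : ∀ x : ℝ, iteratedDeriv n (v t) x = HH n (t, x) := by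
  induction n with
  | zero => intro x; simpa using v_eq t x
  | succ n ih =>
    intro x
    rw [iteratedDeriv_succ]
    have h : iteratedDeriv n (v t) = fun y => HH n (t, y) := funext ih
    rw [h]
    exact (HH_hasDerivAt_x n t x).deriv

lemma deriv_v (t x : ℝ) : deriv (v t) x = HH 1 (t, x) := by
  have h : v t = fun y => HH 0 (t, y) := funext fun y => v_eq t y
  rw [h]
  exact (HH_hasDerivAt_x 0 t x).deriv

lemma curve_hasDerivAt (n : ℕ) {f : ℝ → ℝ} {t : ℝ} (hft : DifferentiableAt ℝ f t) :
    HasDerivAt (fun s => HH n (s, f s))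
      ((1 / 2) * HH (n + 2) (t, f t) + ((deriv f t : ℝ) : ℂ) * HH (n + 1) (t, f t)) t := by
  have hc : HasDerivAt (fun s : ℝ => ((s, f s) : ℝ × ℝ)) ((1 : ℝ), deriv f t) t :=
    (hasDerivAt_id t).prodMk hft.hasDerivAt
  have := (HH_hasFDerivAt n (t, f t)).comp_hasDerivAt t hc
  simp [Complex.real_smul] at this
  rw [one_div]
  exact this

lemma eq_zero_of_hasDerivAt_Ici {g : ℝ → ℂ} {e : ℂ} {t : ℝ} (ht : 0 ≤ t)
    (hg : HasDerivAt g e t) (h0 : ∀ s, 0 ≤ s → g s = 0) : e = 0 := by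
  have hu : UniqueDiffWithinAt ℝ (Set.Ici (0 : ℝ)) t := uniqueDiffOn_Ici 0 t ht
  have h1 : HasDerivWithinAt g e (Set.Ici 0) t := hg.hasDerivWithinAt
  have h2 : HasDerivWithinAt g 0 (Set.Ici 0) t :=
    (hasDerivWithinAt_const t _ (0 : ℂ)).congr (fun s hs => h0 s hs) (h0 t ht)
  rw [← h1.derivWithin hu]
  exact h2.derivWithin hu

/-- Second total-time-derivative relation along a zero curve of `v`. -/
theorem zero_curve_second_order_relation
    (f : ℝ → ℝ)
    (hf : ∀ t ≥ (0 : ℝ), DifferentiableAt ℝ f t)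
    (hf' : ∀ t ≥ (0 : ℝ), DifferentiableAt ℝ (deriv f) t)
    (hzero : ∀ t ≥ (0 : ℝ), v t (f t) = 0) :
    ∀ t ≥ (0 : ℝ),
      ((deriv (deriv f) t : ℝ) : ℂ) * deriv (v t) (f t)
        + ((deriv f t : ℝ) : ℂ) *
            (((deriv f t : ℝ) : ℂ) * iteratedDeriv 2 (v t) (f t)
              + iteratedDeriv 3 (v t) (f t))
        + (1 / 4 : ℂ) * iteratedDeriv 4 (v t) (f t) = 0 := by
  intro t ht
  have hz0 : ∀ s, 0 ≤ s → HH 0 (s, f s) = 0 := fun s hs => (v_eq s (f s)) ▸ hzero s hs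
  have step1 : ∀ s, 0 ≤ s →
      (1 / 2 : ℂ) * HH 2 (s, f s) + ((deriv f s : ℝ) : ℂ) * HH 1 (s, f s) = 0 :=
    fun s hs => eq_zero_of_hasDerivAt_Ici hs (curve_hasDerivAt 0 (hf s hs)) hz0
  have hd : HasDerivAt
      (fun s => (1 / 2 : ℂ) * HH 2 (s, f s) + ((deriv f s : ℝ) : ℂ) * HH 1 (s, f s))
      ((1 / 2 : ℂ) * ((1 / 2) * HH 4 (t, f t) + ((deriv f t : ℝ) : ℂ) * HH 3 (t, f t))
        + (((deriv (deriv f) t : ℝ) : ℂ) * HH 1 (t, f t)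
          + ((deriv f t : ℝ) : ℂ) *
            ((1 / 2) * HH 3 (t, f t) + ((deriv f t : ℝ) : ℂ) * HH 2 (t, f t)))) t :=
    ((curve_hasDerivAt 2 (hf t ht)).const_mul (1 / 2 : ℂ)).add
      (HasDerivAt.mul ((hf' t ht).hasDerivAt.ofReal_comp) (curve_hasDerivAt 1 (hf t ht)))
  have hE := eq_zero_of_hasDerivAt_Ici ht hd step1
  rw [deriv_v, iter_eq, iter_eq, iter_eq]
  linear_combination hE
end

section
/- For every t ≥ 0 and x ∈ ℝ, the third space derivative of v satisfies ∂ₓ³v(t,x) = x·v(t,x) + t·∂ₓv(t,x). -/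
open MeasureTheory Real Filter

namespace ThirdDerivAux

open Complex FourierTransform

/-- The real-valued profile. -/
noncomputable def r (t l : ℝ) : ℝ :=
  (1 / (2 * Real.pi)) * Real.exp (-(l ^ 2 * t / 2) - l ^ 4 / 4)

/-- The complex-valued profile inside the Fourier integral. -/
noncomputable def g (t : ℝ) (l : ℝ) : ℂ := (r t l : ℂ)

lemma r_pos (t l : ℝ) : 0 < r t l := by
  have : (0:ℝ) < 1 / (2 * Real.pi) := by positivity
  exact mul_pos this (Real.exp_pos _)

lemma hasDerivAt_r (t l : ℝ) : HasDerivAt (r t) ((-(t * l) - l ^ 3) * r t l) l := by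
  have h1 : HasDerivAt (fun l : ℝ => -(l ^ 2 * t / 2) - l ^ 4 / 4)
      (-(t * l) - l ^ 3) l := by
    have h2 : HasDerivAt (fun l : ℝ => -(l ^ 2 * t / 2) - l ^ 4 / 4)
        (-((2 : ℕ) * l ^ (2 - 1) * t / 2) - (4 : ℕ) * l ^ (4 - 1) / 4) l := by
      exact ((((hasDerivAt_pow 2 l).mul_const t).div_const 2).neg).sub
        ((hasDerivAt_pow 4 l).div_const 4)
    convert h2 using 1
    push_cast
    ring
  have := ((h1.exp).const_mul (1 / (2 * Real.pi)))
  convert! this using 1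
  simp only [r]
  ring

lemma hasDerivAt_g (t l : ℝ) :
    HasDerivAt (g t) ((((-(t * l) - l ^ 3) * r t l : ℝ)) : ℂ) l :=
  (hasDerivAt_r t l).ofReal_comp

lemma deriv_g (t : ℝ) :
    deriv (g t) = fun l => ((-(t * l) - l ^ 3 : ℝ) : ℂ) * g t l := by
  funext l
  rw [(hasDerivAt_g t l).deriv]
  push_cast [g]
  ring

lemma continuous_g (t : ℝ) : Continuous (g t) := by
  apply Complex.continuous_ofReal.comp
  unfold r
  fun_prop

lemma norm_g (t l : ℝ) : ‖g t l‖ = r t l := by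
  rw [g, Complex.norm_real, Real.norm_eq_abs, abs_of_pos (r_pos t l)]

/-- Key integrability: all moments of `g` are integrable when `t ≥ 0`. -/
lemma g_int {t : ℝ} (ht : 0 ≤ t) (n : ℕ) :
    Integrable (fun l : ℝ => l ^ n • g t l) := by
  apply Integrable.mono' (((integrable_exp_neg_mul_sq (one_pos)).const_mul
    (Real.exp ((n : ℝ) ^ 2 + 2))))
  · exact ((continuous_pow n).smul (continuous_g t)).aestronglyMeasurable
  · filter_upwards with l
    rw [norm_smul, norm_g, Real.norm_eq_abs, _root_.abs_pow]
    have h1 : |l| ^ n ≤ Real.exp ((n : ℝ) * |l|) := by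
      calc |l| ^ n ≤ (Real.exp |l|) ^ n := by
            apply pow_le_pow_left₀ (abs_nonneg l)
            linarith [Real.add_one_le_exp |l|]
        _ = Real.exp ((n : ℝ) * |l|) := by
            rw [← Real.exp_nat_mul]
  -- bound r t l
    have h2 : r t l ≤ Real.exp (-(l ^ 4 / 4)) := by
      unfold r
      have hp : 1 / (2 * Real.pi) ≤ 1 := by
        rw [div_le_one (by positivity)]
        nlinarith [Real.pi_gt_three]
      calc (1 / (2 * Real.pi)) * Real.exp (-(l ^ 2 * t / 2) - l ^ 4 / 4)
          ≤ 1 * Real.exp (-(l ^ 2 * t / 2) - l ^ 4 / 4) := by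
            apply mul_le_mul_of_nonneg_right hp (Real.exp_pos _).le
        _ = Real.exp (-(l ^ 2 * t / 2) - l ^ 4 / 4) := one_mul _
        _ ≤ Real.exp (-(l ^ 4 / 4)) := by
            apply Real.exp_le_exp.2
            nlinarith [sq_nonneg l]
    calc |l| ^ n * r t l ≤ Real.exp ((n : ℝ) * |l|) * Real.exp (-(l ^ 4 / 4)) := by
          apply mul_le_mul h1 h2 (le_of_lt (r_pos t l)) (Real.exp_pos _).le
      _ = Real.exp ((n : ℝ) * |l| - l ^ 4 / 4) := by rw [← Real.exp_add]; ring_nf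
      _ ≤ Real.exp (((n : ℝ) ^ 2 + 2) + (-1) * l ^ 2) := by
          apply Real.exp_le_exp.2
          have habs : |l| ^ 2 = l ^ 2 := sq_abs l
          have habs4 : (l ^ 2) ^ 2 = l ^ 4 := by ring
          nlinarith [sq_nonneg ((n : ℝ) - |l| / 2), sq_nonneg (l ^ 2 - 5 / 2),
            abs_nonneg l, sq_nonneg l]
      _ = Real.exp ((n : ℝ) ^ 2 + 2) * Real.exp ((-1) * l ^ 2) := by
          rw [← Real.exp_add]

lemma g_norm_int {t : ℝ} (ht : 0 ≤ t) :
    ∀ n : ℕ, (n : ℕ∞) ≤ 3 → Integrable (fun l : ℝ => ‖l‖ ^ n * ‖g t l‖) := by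
  intro n _
  have := (g_int ht n).norm
  convert! this using 2 with l
  rw [norm_smul, Real.norm_eq_abs, Real.norm_eq_abs, _root_.abs_pow]

/-- Unfolding the one-dimensional Fourier integral at the rescaled point. -/
lemma fourier_at (h : ℝ → ℂ) (x : ℝ) :
    𝓕 h (-(1 / (2 * Real.pi)) * x) = ∫ l : ℝ, Complex.exp (Complex.I * l * x) * h l := by
  rw [Real.fourier_eq']
  congr 1 with l
  rw [smul_eq_mul]
  congr 1
  have hpi : (-2) * π * (l * (-(1 / (2 * π)) * x)) = l * x := by
    field_simp
  simp only [RCLike.inner_apply, conj_trivial]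
  rw [mul_comm (-(1 / (2 * π)) * x) l, hpi]
  push_cast
  ring

lemma integrand_eq (t x l : ℝ) :
    Complex.exp (Complex.I * l * x) * g t l =
      (1 / (2 * (Real.pi : ℂ))) *
        Complex.exp (Complex.I * l * x - l ^ 2 * t / 2 - l ^ 4 / 4) := by
  have : Complex.exp (Complex.I * l * x - (l:ℂ) ^ 2 * t / 2 - (l:ℂ) ^ 4 / 4)
      = Complex.exp (Complex.I * l * x) *
        Complex.exp (((-(l ^ 2 * t / 2) - l ^ 4 / 4 : ℝ) : ℂ)) := by
    rw [← Complex.exp_add]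
    congr 1
    push_cast
    ring
  rw [this, g, r]
  push_cast [Complex.ofReal_exp]
  ring

/-- `v` is the Fourier integral of `g` at the rescaled point. -/
lemma v_eq (t : ℝ) : v t = fun x => 𝓕 (g t) (-(1 / (2 * Real.pi)) * x) := by
  funext x
  rw [fourier_at]
  simp_rw [integrand_eq]
  rw [MeasureTheory.integral_const_mul]
  rfl

/-- Integrability of the moment integrands appearing after differentiation. -/
lemma fn_int {t : ℝ} (ht : 0 ≤ t) (x : ℝ) (n : ℕ) :
    Integrable (fun l : ℝ => (l : ℂ) ^ n * (Complex.exp (Complex.I * l * x) * g t l)) := by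
  have : (fun l : ℝ => (l : ℂ) ^ n * (Complex.exp (Complex.I * l * x) * g t l))
      = fun l : ℝ => Complex.exp (Complex.I * l * x) * (l ^ n • g t l) := by
    funext l
    rw [Complex.real_smul]
    push_cast
    ring
  rw [this]
  apply (g_int ht n).bdd_mul (c := 1)
  · apply Continuous.aestronglyMeasurable
    fun_prop
  · refine ae_of_all _ (fun l => ?_)
    rw [Complex.norm_exp]
    simp [Complex.mul_re]

end ThirdDerivAux

open ThirdDerivAux Complex FourierTransform in
/-- The third space derivative of `v` satisfies
`∂ₓ³v = x·v + t·∂ₓv`. -/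
theorem third_space_derivative_identity :
    ∀ t ≥ (0 : ℝ), ∀ x : ℝ,
      iteratedDeriv 3 (v t) x = (x : ℂ) * v t x + (t : ℂ) * deriv (v t) x := by
  intro t ht x
  set a : ℝ := -(1 / (2 * Real.pi)) with ha
  have hpi : (Real.pi : ℂ) ≠ 0 := by exact_mod_cast Real.pi_ne_zero
  have hac : ((a : ℂ)) * (-(2 * (Real.pi : ℂ))) = 1 := by
    rw [ha]
    push_cast
    field_simp
  -- the integrals J n
  set J : ℕ → ℂ := fun n => ∫ l : ℝ, (l : ℂ) ^ n * (Complex.exp (Complex.I * l * x) * g t l)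
    with hJ
  -- contDiff of the Fourier transform
  have hW : ContDiff ℝ 3 (𝓕 (g t)) := Real.contDiff_fourier (g_norm_int ht)
  have hmom : ∀ n : ℕ, (n : ℕ∞) ≤ 3 → Integrable (fun l : ℝ => l ^ n • g t l) :=
    fun n _ => g_int ht n
  -- v t = W ∘ (a * ·)
  have hv : v t = fun y => 𝓕 (g t) (a * y) := v_eq t
  -- L0 : v t x = J 0
  have L0 : v t x = J 0 := by
    rw [hv]
    show 𝓕 (g t) (a * x) = J 0
    rw [ha]
    rw [show -(1 / (2 * Real.pi)) * x = -(1 / (2 * Real.pi)) * x from rfl, fourier_at (g t) x]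
    simp [hJ]
  -- L1 : deriv (v t) x = I * J 1
  have hderivW : deriv (𝓕 (g t)) =
      𝓕 (fun l : ℝ => (-2 * π * Complex.I * l) • g t l) := by
    apply Real.deriv_fourier
    · simpa using g_int ht 0
    · simpa using g_int ht 1
  have L1 : deriv (v t) x = Complex.I * J 1 := by
    have h1 : iteratedDeriv 1 (v t) = fun y => a ^ 1 • iteratedDeriv 1 (𝓕 (g t)) (a * y) := by
      rw [hv]
      exact iteratedDeriv_comp_const_smul (hW.of_le (by norm_num)) a
    have h2 : deriv (v t) x = a ^ 1 • deriv (𝓕 (g t)) (a * x) := by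
      have := congrFun h1 x
      rwa [iteratedDeriv_one, iteratedDeriv_one] at this
    rw [h2, hderivW, pow_one]
    have hax : a * x = -(1 / (2 * Real.pi)) * x := by rw [ha]
    rw [hax, fourier_at]
    have : ∀ l : ℝ, Complex.exp (Complex.I * l * x) * ((-2 * π * Complex.I * l) • g t l)
        = (-2 * ↑π * Complex.I) * ((l : ℂ) ^ 1 * (Complex.exp (Complex.I * l * x) * g t l)) := by
      intro l
      rw [smul_eq_mul]
      push_cast
      ring
    simp_rw [this]
    rw [MeasureTheory.integral_const_mul]
    rw [Complex.real_smul]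
    have : ((a : ℂ)) * (-2 * ↑π * Complex.I) = Complex.I := by
      calc ((a : ℂ)) * (-2 * ↑π * Complex.I) = (((a : ℂ)) * (-(2 * ↑π))) * Complex.I := by ring
        _ = Complex.I := by rw [hac]; ring
    rw [← mul_assoc, this]
  -- L3 : iteratedDeriv 3 (v t) x = -I * J 3
  have hiter3 : iteratedDeriv 3 (𝓕 (g t)) =
      𝓕 (fun l : ℝ => (-2 * π * Complex.I * l) ^ 3 • g t l) :=
    Real.iteratedDeriv_fourier hmom (by norm_num)
  have L3 : iteratedDeriv 3 (v t) x = -Complex.I * J 3 := by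
    have h1 : iteratedDeriv 3 (v t) = fun y => a ^ 3 • iteratedDeriv 3 (𝓕 (g t)) (a * y) := by
      rw [hv]
      exact iteratedDeriv_comp_const_smul hW a
    rw [congrFun h1 x, hiter3]
    have hax : a * x = -(1 / (2 * Real.pi)) * x := by rw [ha]
    rw [hax, fourier_at]
    have : ∀ l : ℝ, Complex.exp (Complex.I * l * x) * ((-2 * π * Complex.I * l) ^ 3 • g t l)
        = ((-2 * ↑π * Complex.I) ^ 3) *
            ((l : ℂ) ^ 3 * (Complex.exp (Complex.I * l * x) * g t l)) := by
      intro l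
      rw [smul_eq_mul]
      push_cast
      ring
    simp_rw [this]
    rw [MeasureTheory.integral_const_mul]
    rw [Complex.real_smul]
    have hkey : ((a : ℂ)) ^ 3 * (-2 * ↑π * Complex.I) ^ 3 = -Complex.I := by
      have : ((a : ℂ)) ^ 3 * (-2 * ↑π * Complex.I) ^ 3
          = ((((a : ℂ)) * (-(2 * ↑π))) * Complex.I) ^ 3 := by ring
      rw [this, hac, one_mul]
      simp [pow_succ, Complex.I_mul_I]
    push_cast
    rw [← mul_assoc, hkey]
  -- Integration by parts via the Fourier transform of the derivative
  have hIBP : -(t : ℂ) * J 1 - J 3 = -(Complex.I * x) * J 0 := by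
    have hgint : Integrable (g t) := by simpa using g_int ht 0
    have hgdiff : Differentiable ℝ (g t) := fun l => (hasDerivAt_g t l).differentiableAt
    have hgdint : Integrable (deriv (g t)) := by
      rw [deriv_g]
      have : (fun l : ℝ => ((-(t * l) - l ^ 3 : ℝ) : ℂ) * g t l)
          = (fun l : ℝ => (-t) • (l ^ 1 • g t l) + (-1 : ℝ) • (l ^ 3 • g t l)) := by
        funext l
        simp only [Complex.real_smul]
        push_cast
        ring
      rw [this]
      exact ((g_int ht 1).smul (-t)).add ((g_int ht 3).smul (-1 : ℝ))
    have hF := Real.fourier_deriv hgint hgdiff hgdint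
    have hFx := congrFun hF (a * x)
    have hax : a * x = -(1 / (2 * Real.pi)) * x := by rw [ha]
    rw [hax, fourier_at, fourier_at] at hFx
    -- LHS of hFx
    have hL : (∫ l : ℝ, Complex.exp (Complex.I * l * x) * deriv (g t) l)
        = -(t : ℂ) * J 1 - J 3 := by
      rw [deriv_g]
      have : ∀ l : ℝ, Complex.exp (Complex.I * l * x) * (((-(t * l) - l ^ 3 : ℝ) : ℂ) * g t l)
          = (-(t:ℂ)) * ((l:ℂ) ^ 1 * (Complex.exp (Complex.I * l * x) * g t l))
            - (l:ℂ) ^ 3 * (Complex.exp (Complex.I * l * x) * g t l) := by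
        intro l
        push_cast
        ring
      simp_rw [this]
      rw [MeasureTheory.integral_sub (((fn_int ht x 1).const_mul _)) (fn_int ht x 3),
        MeasureTheory.integral_const_mul]
    -- RHS of hFx
    have hR : (2 * ↑π * Complex.I * ((a * x : ℝ) : ℂ)) •
        (∫ l : ℝ, Complex.exp (Complex.I * l * x) * g t l) = -(Complex.I * x) * J 0 := by
      rw [smul_eq_mul]
      have h0 : (∫ l : ℝ, Complex.exp (Complex.I * l * x) * g t l) = J 0 := by
        simp [hJ]
      rw [h0]
      congr 1
      have : ((a * x : ℝ) : ℂ) = (a : ℂ) * (x : ℂ) := by push_cast; ring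
      rw [this]
      calc 2 * ↑π * Complex.I * ((a:ℂ) * ↑x)
          = -(((a:ℂ) * (-(2 * ↑π))) * (Complex.I * ↑x)) := by ring
        _ = -(Complex.I * ↑x) := by rw [hac]; ring
    rw [hL] at hFx
    rw [hFx, hR]
  -- conclude
  rw [L3, L0, L1]
  linear_combination Complex.I * hIBP - (x : ℂ) * J 0 * Complex.I_sq
end

section
/- For every t ≥ 0 and x ∈ ℝ, the fourth space derivative of v satisfies ∂ₓ⁴v(t,x) = v(t,x) + x·∂ₓv(t,x) + t·∂ₓ²v(t,x). -/
open MeasureTheory Real Filter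

namespace VAux

noncomputable def Ee (t x l : ℝ) : ℂ :=
  Complex.exp (Complex.I * l * x - l ^ 2 * t / 2 - l ^ 4 / 4)

lemma norm_Ee (t x l : ℝ) :
    ‖Ee t x l‖ = Real.exp (-(l ^ 2 * t / 2) - l ^ 4 / 4) := by
  have h : (Complex.I * l * x - l ^ 2 * t / 2 - l ^ 4 / 4 : ℂ)
      = ((-(l ^ 2 * t / 2) - l ^ 4 / 4 : ℝ) : ℂ) + ((l * x : ℝ) : ℂ) * Complex.I := by
    push_cast; ring
  rw [Ee, h, Complex.norm_exp]
  simp [← Complex.ofReal_pow]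

lemma contEe (t x : ℝ) : Continuous fun l : ℝ => Ee t x l := by
  unfold Ee; fun_prop

lemma pow_le (n : ℕ) (l : ℝ) :
    |l| ^ n ≤ (1 + 4 ^ n * (n.factorial)) * Real.exp (4⁻¹ * l ^ 2) := by
  have hexp1 : (1 : ℝ) ≤ Real.exp (4⁻¹ * l ^ 2) := Real.one_le_exp (by positivity)
  have hB : ((l ^ 2) / 4) ^ n ≤ (n.factorial) * Real.exp (4⁻¹ * l ^ 2) := by
    have := Real.pow_div_factorial_le_exp (x := l ^ 2 / 4) (by positivity) n
    rw [div_le_iff₀ (by positivity : (0:ℝ) < ((n.factorial) : ℝ))] at this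
    calc ((l ^ 2) / 4) ^ n ≤ Real.exp (l ^ 2 / 4) * (n.factorial) := this
      _ = (n.factorial) * Real.exp (4⁻¹ * l ^ 2) := by rw [mul_comm]; congr 1; ring_nf
  have hA : |l| ^ n ≤ 1 + (l ^ 2) ^ n := by
    rcases le_total |l| 1 with h | h
    · have : |l| ^ n ≤ 1 := pow_le_one₀ (abs_nonneg l) h
      nlinarith [pow_nonneg (sq_nonneg l) n]
    · have h2 : |l| ≤ l ^ 2 := by nlinarith [abs_nonneg l, sq_abs l]
      have : |l| ^ n ≤ (l ^ 2) ^ n := pow_le_pow_left₀ (abs_nonneg l) h2 n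
      linarith
  have h4 : (l ^ 2) ^ n = 4 ^ n * ((l ^ 2) / 4) ^ n := by
    rw [← mul_pow]; congr 1; ring
  have h4n : (0:ℝ) ≤ 4 ^ n := by positivity
  calc |l| ^ n ≤ 1 + (l ^ 2) ^ n := hA
    _ = 1 + 4 ^ n * ((l ^ 2) / 4) ^ n := by rw [h4]
    _ ≤ Real.exp (4⁻¹ * l ^ 2) + 4 ^ n * ((n.factorial) * Real.exp (4⁻¹ * l ^ 2)) := by
        have := mul_le_mul_of_nonneg_left hB h4n
        linarith
    _ = (1 + 4 ^ n * (n.factorial)) * Real.exp (4⁻¹ * l ^ 2) := by ring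

noncomputable def C (n : ℕ) : ℝ := Real.exp (1 / 4) * (1 + 4 ^ n * (n.factorial))

lemma key_bound {t : ℝ} (ht : 0 ≤ t) (x : ℝ) (n : ℕ) (l : ℝ) :
    |l| ^ n * ‖Ee t x l‖ ≤ C n * Real.exp (-(4⁻¹) * l ^ 2) := by
  have h2 : Real.exp (-(l ^ 2 * t / 2) - l ^ 4 / 4)
      ≤ Real.exp (1 / 4) * Real.exp (-(2⁻¹) * l ^ 2) := by
    rw [← Real.exp_add]
    apply Real.exp_le_exp.2
    nlinarith [sq_nonneg (l ^ 2 - 1), mul_nonneg (mul_nonneg (sq_nonneg l) ht) (by norm_num : (0:ℝ) ≤ 1/2), sq_nonneg l]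
  calc |l| ^ n * ‖Ee t x l‖ ≤ ((1 + 4 ^ n * (n.factorial)) * Real.exp (4⁻¹ * l ^ 2))
        * (Real.exp (1 / 4) * Real.exp (-(2⁻¹) * l ^ 2)) := by
        rw [norm_Ee]
        exact mul_le_mul (pow_le n l) h2 (Real.exp_pos _).le (by positivity)
    _ = C n * Real.exp (-(4⁻¹) * l ^ 2) := by
        have he : Real.exp (4⁻¹ * l ^ 2) * Real.exp (-(2⁻¹) * l ^ 2)
            = Real.exp (-(4⁻¹) * l ^ 2) := by
          rw [← Real.exp_add]; congr 1; ring
        rw [C, ← he]; ring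

lemma bound_integrable (n : ℕ) :
    Integrable fun l : ℝ => C n * Real.exp (-(4⁻¹) * l ^ 2) :=
  (integrable_exp_neg_mul_sq (by norm_num : (0:ℝ) < 4⁻¹)).const_mul _

lemma integrable_of_le {t : ℝ} (ht : 0 ≤ t) (x : ℝ) (n : ℕ) {f : ℝ → ℂ}
    (hc : Continuous f) (h : ∀ l, ‖f l‖ ≤ |l| ^ n * ‖Ee t x l‖) : Integrable f :=
  (bound_integrable n).mono' hc.aestronglyMeasurable
    (ae_of_all _ fun l => (h l).trans (key_bound ht x n l))

lemma norm_mono (t x l : ℝ) (n : ℕ) :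
    ‖(Complex.I * l) ^ n * Ee t x l‖ = |l| ^ n * ‖Ee t x l‖ := by
  rw [norm_mul, norm_pow, norm_mul, Complex.norm_I, Complex.norm_real, Real.norm_eq_abs, one_mul]

lemma integrable_mono {t : ℝ} (ht : 0 ≤ t) (x : ℝ) (n : ℕ) :
    Integrable fun l : ℝ => (Complex.I * l) ^ n * Ee t x l := by
  apply integrable_of_le ht x n
  · exact (Continuous.pow (by fun_prop) n).mul (contEe t x)
  · intro l; rw [norm_mono]

lemma norm_mono' (t x l : ℝ) (n : ℕ) :
    ‖((l : ℂ)) ^ n * Ee t x l‖ = |l| ^ n * ‖Ee t x l‖ := by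
  rw [norm_mul, norm_pow, Complex.norm_real, Real.norm_eq_abs]

lemma integrable_mono' {t : ℝ} (ht : 0 ≤ t) (x : ℝ) (n : ℕ) :
    Integrable fun l : ℝ => ((l : ℂ)) ^ n * Ee t x l := by
  apply integrable_of_le ht x n
  · exact (Continuous.pow (by fun_prop) n).mul (contEe t x)
  · intro l; rw [norm_mono']

lemma hasDerivAt_Ee (t l x : ℝ) :
    HasDerivAt (fun y : ℝ => Ee t y l) (Complex.I * l * Ee t x l) x := by
  have h0 : HasDerivAt (fun y : ℝ => (y : ℂ)) 1 x := (hasDerivAt_id x).ofReal_comp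
  have h1 : HasDerivAt
      (fun y : ℝ => Complex.I * l * y - (l:ℂ) ^ 2 * t / 2 - (l:ℂ) ^ 4 / 4)
      (Complex.I * l) x := by
    simpa using ((h0.const_mul (Complex.I * l)).sub_const ((l:ℂ) ^ 2 * t / 2)).sub_const ((l:ℂ) ^ 4 / 4)
  have := h1.cexp
  rw [show Complex.exp (Complex.I * ↑l * ↑x - (l:ℂ) ^ 2 * ↑t / 2 - (l:ℂ) ^ 4 / 4) * (Complex.I * ↑l)
    = Complex.I * l * Ee t x l from by rw [Ee]; ring] at this
  exact this

noncomputable def G (t : ℝ) (n : ℕ) (y : ℝ) : ℂ :=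
  ∫ l : ℝ, (Complex.I * l) ^ n * Ee t y l

lemma hasDerivAt_G {t : ℝ} (ht : 0 ≤ t) (n : ℕ) (x : ℝ) :
    HasDerivAt (G t n) (G t (n + 1) x) x := by
  have key := hasDerivAt_integral_of_dominated_loc_of_deriv_le
    (F := fun y (l : ℝ) => (Complex.I * l) ^ n * Ee t y l)
    (F' := fun y (l : ℝ) => (Complex.I * l) ^ (n + 1) * Ee t y l)
    (bound := fun l : ℝ => C (n + 1) * Real.exp (-(4⁻¹) * l ^ 2))
    (x₀ := x) (s := Metric.ball x 1) (Metric.ball_mem_nhds x one_pos)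
    (Eventually.of_forall fun y =>
      (((Continuous.pow (by fun_prop) n).mul (contEe t y)).aestronglyMeasurable))
    (integrable_mono ht x n)
    (((Continuous.pow (by fun_prop) (n + 1)).mul (contEe t x)).aestronglyMeasurable)
    (ae_of_all _ fun l y _ => by
      rw [norm_mono]
      have h := key_bound ht y (n + 1) l
      rw [norm_Ee] at h ⊢
      exact h)
    (bound_integrable (n + 1))
    (ae_of_all _ fun l y _ => by
      have h := (hasDerivAt_Ee t l y).const_mul ((Complex.I * l) ^ n)
      rw [show (Complex.I * ↑l) ^ n * (Complex.I * ↑l * Ee t y l)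
        = (Complex.I * ↑l) ^ (n + 1) * Ee t y l from by rw [pow_succ]; ring] at h
      exact h)
  exact key.2

lemma ibp {t : ℝ} (ht : 0 ≤ t) (x : ℝ) :
    (∫ l : ℝ, ((l : ℂ)) ^ 4 * Ee t x l)
      = (∫ l : ℝ, ((l : ℂ)) ^ 0 * Ee t x l)
        + Complex.I * x * (∫ l : ℝ, ((l : ℂ)) ^ 1 * Ee t x l)
        - t * (∫ l : ℝ, ((l : ℂ)) ^ 2 * Ee t x l) := by
  have hEl : ∀ l : ℝ, HasDerivAt (fun l : ℝ => Ee t x l)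
      ((Complex.I * x - t * l - (l:ℂ) ^ 3) * Ee t x l) l := by
    intro l
    have h0 : HasDerivAt (fun l : ℝ => (l : ℂ)) 1 l := (hasDerivAt_id l).ofReal_comp
    have hu : HasDerivAt
        (fun l : ℝ => Complex.I * (l:ℂ) * x - (l:ℂ) ^ 2 * t / 2 - (l:ℂ) ^ 4 / 4)
        (Complex.I * x - t * l - (l:ℂ) ^ 3) l := by
      have hz : HasDerivAt
          (fun z : ℂ => Complex.I * z * (x:ℂ) - z ^ 2 * (t:ℂ) / 2 - z ^ 4 / 4)
          (Complex.I * x - t * l - (l:ℂ) ^ 3) ((l:ℝ) : ℂ) := by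
        have h1 := ((hasDerivAt_id ((l:ℝ) : ℂ)).const_mul Complex.I).mul_const (x : ℂ)
        have h2 := (((hasDerivAt_id ((l:ℝ) : ℂ)).pow 2).mul_const (t : ℂ)).div_const 2
        have h3 := ((hasDerivAt_id ((l:ℝ) : ℂ)).pow 4).div_const 4
        have h4 := (h1.sub h2).sub h3
        refine h4.congr_deriv ?_
        simp [id]
        ring
      exact hz.comp_ofReal
    have hc := hu.cexp
    rw [show Complex.exp (Complex.I * ↑l * ↑x - (l:ℂ) ^ 2 * ↑t / 2 - (l:ℂ) ^ 4 / 4)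
        * (Complex.I * ↑x - ↑t * ↑l - (l:ℂ) ^ 3)
      = (Complex.I * ↑x - ↑t * ↑l - (l:ℂ) ^ 3) * Ee t x l from by rw [Ee]; ring] at hc
    exact hc
  have hf : ∀ l : ℝ, HasDerivAt (fun l : ℝ => (l : ℂ) * Ee t x l)
      (((l:ℂ)) ^ 0 * Ee t x l + Complex.I * x * (((l:ℂ)) ^ 1 * Ee t x l)
        - (t : ℂ) * (((l:ℂ)) ^ 2 * Ee t x l) - ((l:ℂ)) ^ 4 * Ee t x l) l := by
    intro l
    have h0 : HasDerivAt (fun l : ℝ => (l : ℂ)) 1 l := (hasDerivAt_id l).ofReal_comp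
    have h := h0.mul (hEl l)
    refine h.congr_deriv ?_
    ring
  have I0 := integrable_mono' ht x 0
  have I1 := integrable_mono' ht x 1
  have I2 := integrable_mono' ht x 2
  have I4 := integrable_mono' ht x 4
  have hI1' : Integrable fun l : ℝ => (l : ℂ) * Ee t x l := by
    have := I1; simpa [pow_one] using this
  have hf' : Integrable fun l : ℝ =>
      ((l:ℂ)) ^ 0 * Ee t x l + Complex.I * x * (((l:ℂ)) ^ 1 * Ee t x l)
        - (t : ℂ) * (((l:ℂ)) ^ 2 * Ee t x l) - ((l:ℂ)) ^ 4 * Ee t x l :=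
    ((I0.add (I1.const_mul _)).sub (I2.const_mul _)).sub I4
  have hzero := integral_eq_zero_of_hasDerivAt_of_integrable hf hf' hI1'
  have hAB : Integrable fun l : ℝ =>
      ((l:ℂ)) ^ 0 * Ee t x l + Complex.I * x * (((l:ℂ)) ^ 1 * Ee t x l) :=
    I0.add (I1.const_mul _)
  have hABC : Integrable fun l : ℝ =>
      ((l:ℂ)) ^ 0 * Ee t x l + Complex.I * x * (((l:ℂ)) ^ 1 * Ee t x l)
        - (t : ℂ) * (((l:ℂ)) ^ 2 * Ee t x l) :=
    hAB.sub (I2.const_mul _)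
  rw [integral_sub hABC I4, integral_sub hAB (I2.const_mul _),
    integral_add I0 (I1.const_mul _), integral_const_mul, integral_const_mul] at hzero
  linear_combination -hzero

lemma G_zero (t x : ℝ) : G t 0 x = ∫ l : ℝ, Ee t x l := by
  unfold G; simp

lemma G_one (t x : ℝ) : G t 1 x = Complex.I * ∫ l : ℝ, ((l:ℂ)) ^ 1 * Ee t x l := by
  unfold G
  rw [← integral_const_mul]
  congr 1; funext l; ring

lemma G_two (t x : ℝ) : G t 2 x = - ∫ l : ℝ, ((l:ℂ)) ^ 2 * Ee t x l := by
  unfold G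
  rw [← integral_neg]
  congr 1; funext l
  rw [mul_pow, Complex.I_sq]; ring

lemma G_four (t x : ℝ) : G t 4 x = ∫ l : ℝ, ((l:ℂ)) ^ 4 * Ee t x l := by
  unfold G
  congr 1; funext l
  rw [mul_pow, Complex.I_pow_four]; ring

end VAux

open VAux in
/-- The fourth space derivative of `v` satisfies
`∂ₓ⁴v = v + x·∂ₓv + t·∂ₓ²v`. -/
theorem fourth_space_derivative_identity :
    ∀ t ≥ (0 : ℝ), ∀ x : ℝ,
      iteratedDeriv 4 (v t) x
        = v t x + (x : ℂ) * deriv (v t) x + (t : ℂ) * iteratedDeriv 2 (v t) x := by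
  intro t ht x
  set c : ℂ := 1 / (2 * (Real.pi : ℂ)) with hc
  have hv : v t = fun y => c * G t 0 y := by
    funext y
    rw [v, hc, G_zero]
    rfl
  have hder : ∀ n : ℕ, (deriv fun y => c * G t n y) = fun y => c * G t (n + 1) y := by
    intro n
    funext y
    exact ((hasDerivAt_G ht n y).const_mul c).deriv
  have hiter : ∀ n : ℕ, iteratedDeriv n (fun y => c * G t 0 y) = fun y => c * G t n y := by
    intro n
    induction n with
    | zero => simp [iteratedDeriv_zero]
    | succ k ih => rw [iteratedDeriv_succ, ih, hder k]
  rw [hv]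
  rw [hiter 4, hiter 2, hder 0]
  show c * G t 4 x = c * G t 0 x + ↑x * (c * G t 1 x) + ↑t * (c * G t 2 x)
  rw [G_zero, G_one, G_two, G_four, ibp ht x]
  simp only [pow_zero, one_mul]
  ring
end

section
/- The function v solves the heat equation: for every t > 0 and x ∈ ℝ, ∂ₜv(t,x) = (1/2)·∂ₓ²v(t,x). -/
open MeasureTheory Real Filter

noncomputable def f (t x l : ℝ) : ℂ :=
  Complex.exp (Complex.I * l * x - l ^ 2 * t / 2 - l ^ 4 / 4)

lemma continuous_f (t x : ℝ) : Continuous fun l : ℝ => f t x l := by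
  unfold f; fun_prop

lemma norm_f (t x l : ℝ) : ‖f t x l‖ = Real.exp (-(l ^ 2 * t / 2) - l ^ 4 / 4) := by
  have h : (Complex.I * l * x - l ^ 2 * t / 2 - l ^ 4 / 4 : ℂ)
      = ((-(l ^ 2 * t / 2) - l ^ 4 / 4 : ℝ) : ℂ) + (l * x : ℝ) * Complex.I := by
    push_cast; ring
  rw [f, h, Complex.norm_exp]
  norm_num [← Complex.ofReal_pow]

lemma norm_f_le {t s x l : ℝ} (hs : t / 2 ≤ s) :
    ‖f s x l‖ ≤ Real.exp (-(t / 4) * l ^ 2) := by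
  rw [norm_f]
  apply Real.exp_le_exp.2
  nlinarith [sq_nonneg l, sq_nonneg (l ^ 2)]

lemma integrable_sq_mul_exp {c : ℝ} (hc : 0 < c) :
    Integrable fun l : ℝ => l ^ 2 * Real.exp (-c * l ^ 2) := by
  apply Integrable.mono' ((integrable_exp_neg_mul_sq (by linarith : (0:ℝ) < c / 2)).const_mul (2 / c))
  · exact (continuous_pow 2).mul (by fun_prop) |>.aestronglyMeasurable
  · filter_upwards with l
    rw [Real.norm_eq_abs, abs_mul, abs_of_nonneg (sq_abs l ▸ sq_nonneg l : (0:ℝ) ≤ l ^ 2),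
      abs_of_pos (Real.exp_pos _)]
    have h1 : c / 2 * l ^ 2 ≤ Real.exp (c / 2 * l ^ 2) :=
      le_trans (by linarith) (Real.add_one_le_exp _)
    have h2 : l ^ 2 ≤ 2 / c * Real.exp (c / 2 * l ^ 2) := by
      calc l ^ 2 = 2 / c * (c / 2 * l ^ 2) := by field_simp
        _ ≤ 2 / c * Real.exp (c / 2 * l ^ 2) := by
            exact mul_le_mul_of_nonneg_left h1 (by positivity)
    calc l ^ 2 * Real.exp (-c * l ^ 2)
        ≤ (2 / c * Real.exp (c / 2 * l ^ 2)) * Real.exp (-c * l ^ 2) :=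
          mul_le_mul_of_nonneg_right h2 (Real.exp_pos _).le
      _ = 2 / c * Real.exp (-(c / 2) * l ^ 2) := by
          rw [mul_assoc, ← Real.exp_add]; ring_nf

lemma integrable_abs_mul_exp {c : ℝ} (hc : 0 < c) :
    Integrable fun l : ℝ => |l| * Real.exp (-c * l ^ 2) := by
  have := (integrable_mul_exp_neg_mul_sq hc).abs
  simpa [abs_mul, abs_of_pos (Real.exp_pos _)] using this

lemma hasDerivAt_f_t (x l t : ℝ) :
    HasDerivAt (fun s : ℝ => f s x l) ((-(l ^ 2) / 2 : ℂ) * f t x l) t := by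
  have h : HasDerivAt (fun s : ℝ => (s : ℂ)) 1 t := Complex.ofRealCLM.hasDerivAt
  have h2 := (h.const_mul ((l : ℂ) ^ 2)).div_const 2
  have h3 := ((hasDerivAt_const t (Complex.I * l * x)).sub h2).sub_const ((l : ℂ) ^ 4 / 4)
  have h4 := h3.cexp
  unfold f
  convert h4 using 1
  · rfl
  · simp only [Pi.sub_apply]; ring

lemma hasDerivAt_f_x (t l x : ℝ) :
    HasDerivAt (fun y : ℝ => f t y l) (Complex.I * l * f t x l) x := by
  have h : HasDerivAt (fun y : ℝ => (y : ℂ)) 1 x := Complex.ofRealCLM.hasDerivAt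
  have h2 := ((h.const_mul (Complex.I * l)).sub_const ((l : ℂ) ^ 2 * t / 2)).sub_const
    ((l : ℂ) ^ 4 / 4)
  have h3 := h2.cexp
  unfold f
  convert h3 using 1
  ring

lemma hasDerivAt_f_xx (t l x : ℝ) :
    HasDerivAt (fun y : ℝ => Complex.I * l * f t y l)
      (Complex.I * l * (Complex.I * l * f t x l)) x :=
  (hasDerivAt_f_x t l x).const_mul _

lemma integrable_f {t : ℝ} (ht : 0 < t) (x : ℝ) : Integrable fun l : ℝ => f t x l := by
  apply Integrable.mono' (integrable_exp_neg_mul_sq (by linarith : (0:ℝ) < t / 4))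
  · exact (continuous_f t x).aestronglyMeasurable
  · filter_upwards with l
    exact norm_f_le (by linarith)

lemma hasDerivAt_integral_t {t : ℝ} (ht : 0 < t) (x : ℝ) :
    HasDerivAt (fun s : ℝ => ∫ l : ℝ, f s x l)
      (∫ l : ℝ, (-(l ^ 2) / 2 : ℂ) * f t x l) t := by
  refine (hasDerivAt_integral_of_dominated_loc_of_deriv_le (s := Metric.ball t (t / 2)) (x₀ := t)
    (F := fun s l => f s x l)
    (F' := fun s l => (-(l ^ 2) / 2 : ℂ) * f s x l)
    (bound := fun l => l ^ 2 * Real.exp (-(t / 4) * l ^ 2) / 2)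
    (Metric.ball_mem_nhds _ (by linarith)) ?_ (integrable_f ht x) ?_ ?_ ?_ ?_).2
  · exact Eventually.of_forall fun s => (continuous_f s x).aestronglyMeasurable
  · exact (Continuous.mul (by fun_prop) (continuous_f t x)).aestronglyMeasurable
  · filter_upwards with l
    intro s hs
    rw [Metric.mem_ball, Real.dist_eq, abs_lt] at hs
    rw [norm_mul]
    have h1 : ‖(-(l ^ 2) / 2 : ℂ)‖ = l ^ 2 / 2 := by
      rw [norm_div]
      simp [← Complex.ofReal_pow, abs_of_nonneg (sq_nonneg l)]
    rw [h1]
    have h2 := norm_f_le (t := t) (s := s) (x := x) (l := l) (by linarith [hs.1])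
    calc l ^ 2 / 2 * ‖f s x l‖ ≤ l ^ 2 / 2 * Real.exp (-(t / 4) * l ^ 2) := by
          apply mul_le_mul_of_nonneg_left h2 (by positivity)
      _ = l ^ 2 * Real.exp (-(t / 4) * l ^ 2) / 2 := by ring
  · exact (integrable_sq_mul_exp (by linarith : (0:ℝ) < t / 4)).div_const 2
  · filter_upwards with l
    intro s _
    exact hasDerivAt_f_t x l s

lemma norm_If (t x l : ℝ) : ‖Complex.I * l * f t x l‖ = |l| * ‖f t x l‖ := by
  rw [norm_mul, norm_mul]
  simp

lemma hasDerivAt_integral_x {t : ℝ} (ht : 0 < t) (x : ℝ) :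
    HasDerivAt (fun y : ℝ => ∫ l : ℝ, f t y l)
      (∫ l : ℝ, Complex.I * l * f t x l) x := by
  refine (hasDerivAt_integral_of_dominated_loc_of_deriv_le (s := Metric.ball x 1) (x₀ := x)
    (F := fun y l => f t y l)
    (F' := fun y l => Complex.I * l * f t y l)
    (bound := fun l => |l| * Real.exp (-(t / 4) * l ^ 2))
    (Metric.ball_mem_nhds _ one_pos) ?_ (integrable_f ht x) ?_ ?_ ?_ ?_).2
  · exact Eventually.of_forall fun y => (continuous_f t y).aestronglyMeasurable
  · exact (Continuous.mul (by fun_prop) (continuous_f t x)).aestronglyMeasurable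
  · filter_upwards with l
    intro y _
    rw [norm_If]
    exact mul_le_mul_of_nonneg_left (norm_f_le (by linarith)) (abs_nonneg l)
  · exact integrable_abs_mul_exp (by linarith : (0:ℝ) < t / 4)
  · filter_upwards with l
    intro y _
    exact hasDerivAt_f_x t l y

lemma hasDerivAt_integral_xx {t : ℝ} (ht : 0 < t) (x : ℝ) :
    HasDerivAt (fun y : ℝ => ∫ l : ℝ, Complex.I * l * f t y l)
      (∫ l : ℝ, Complex.I * l * (Complex.I * l * f t x l)) x := by
  refine (hasDerivAt_integral_of_dominated_loc_of_deriv_le (s := Metric.ball x 1) (x₀ := x)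
    (F := fun y l => Complex.I * l * f t y l)
    (F' := fun y l => Complex.I * l * (Complex.I * l * f t y l))
    (bound := fun l => l ^ 2 * Real.exp (-(t / 4) * l ^ 2))
    (Metric.ball_mem_nhds _ one_pos) ?_ ?_ ?_ ?_ ?_ ?_).2
  · exact Eventually.of_forall fun y =>
      (Continuous.mul (by fun_prop) (continuous_f t y)).aestronglyMeasurable
  · apply Integrable.mono' (integrable_abs_mul_exp (by linarith : (0:ℝ) < t / 4))
    · exact (Continuous.mul (by fun_prop) (continuous_f t x)).aestronglyMeasurable
    · filter_upwards with l
      rw [norm_If]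
      exact mul_le_mul_of_nonneg_left (norm_f_le (by linarith)) (abs_nonneg l)
  · exact (Continuous.mul (by fun_prop)
      (Continuous.mul (by fun_prop) (continuous_f t x))).aestronglyMeasurable
  · filter_upwards with l
    intro y _
    rw [norm_mul, norm_If]
    have h1 : ‖(Complex.I * l : ℂ)‖ = |l| := by simp
    rw [h1]
    have : |l| * (|l| * ‖f t y l‖) = l ^ 2 * ‖f t y l‖ := by
      rw [← mul_assoc, ← sq_abs]; ring
    rw [this]
    exact mul_le_mul_of_nonneg_left (norm_f_le (by linarith)) (sq_nonneg l)
  · exact integrable_sq_mul_exp (by linarith : (0:ℝ) < t / 4)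
  · filter_upwards with l
    intro y _
    exact hasDerivAt_f_xx t l y


/-- `v` solves the heat equation `∂ₜv = (1/2)·∂ₓ²v` for `t > 0`. -/
theorem v_solves_heat_equation :
    ∀ t > (0 : ℝ), ∀ x : ℝ,
      deriv (fun s => v s x) t = (1 / 2 : ℂ) * iteratedDeriv 2 (v t) x := by
  intro t ht x
  set c : ℂ := 1 / (2 * Real.pi) with hc
  have hA : HasDerivAt (fun s => v s x)
      (c * ∫ l : ℝ, (-(l ^ 2) / 2 : ℂ) * f t x l) t :=
    (hasDerivAt_integral_t ht x).const_mul c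
  rw [hA.deriv]
  have h2 : iteratedDeriv 2 (v t) = deriv (deriv (v t)) := by
    rw [show (2 : ℕ) = 1 + 1 from rfl, iteratedDeriv_succ, iteratedDeriv_one]
  rw [h2]
  have hd1 : deriv (v t) = fun y => c * ∫ l : ℝ, Complex.I * l * f t y l := by
    funext y
    exact ((hasDerivAt_integral_x ht y).const_mul c).deriv
  rw [hd1]
  rw [((hasDerivAt_integral_xx ht x).const_mul c).deriv]
  have hpt : ∀ l : ℝ, Complex.I * l * (Complex.I * l * f t x l)
      = (2 : ℂ) * ((-(l ^ 2) / 2 : ℂ) * f t x l) := by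
    intro l
    linear_combination ((l : ℂ) ^ 2 * f t x l) * Complex.I_sq
  simp_rw [hpt, MeasureTheory.integral_const_mul]
  ring
end

section
/- For every t > 0 and every ξ ∈ ℝ, the following exact identity holds: (3t)^(1/6) · exp( t²/12 − ξ·t^(2/3)/3^(1/3) ) · v( t, −2·(t/3)^(3/2) + ξ·(3t)^(1/6) ) = (1/(2π)) ∫_ℝ exp( izξ + iz³/3 − z⁴/(4·(3t)^(2/3)) ) dz. -/
open MeasureTheory Real Filter

namespace PearceyAux

open intervalIntegral

/-- The entire integrand. -/
noncomputable def F (t x : ℝ) (w : ℂ) : ℂ :=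
  Complex.exp (Complex.I * w * x - w ^ 2 * t / 2 - w ^ 4 / 4)

lemma F_differentiable (t x : ℝ) : Differentiable ℂ (F t x) := by
  unfold F
  apply Differentiable.cexp
  fun_prop

lemma F_continuous_line (t x q : ℝ) : Continuous fun p : ℝ => F t x (p + q * Complex.I) := by
  apply (F_differentiable t x).continuous.comp
  fun_prop

lemma norm_F (t x p q : ℝ) :
    ‖F t x (p + q * Complex.I)‖ =
      Real.exp (-(q*x) - (p^2 - q^2)*t/2 - (p^4 - 6*p^2*q^2 + q^4)/4) := by
  rw [F, Complex.norm_exp]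
  congr 1
  simp [Complex.ext_iff, pow_succ]
  ring

lemma integrable_F (t x : ℝ) (ht : 0 < t) (q : ℝ) :
    Integrable fun p : ℝ => F t x (p + q * Complex.I) := by
  have hbd : ∀ p : ℝ, ‖F t x (p + q * Complex.I)‖ ≤
      Real.exp (|q * x| + q^2*t/2 + (3*q^2/2+1)^2) * Real.exp (-p^2) := by
    intro p
    rw [norm_F, ← Real.exp_add]
    apply Real.exp_le_exp.2
    nlinarith [sq_nonneg (p^2/2 - (3*q^2/2+1)), neg_abs_le (q*x), sq_nonneg q, sq_nonneg (q^2),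
      mul_nonneg (mul_nonneg (sq_nonneg p) (sq_nonneg q)) ht.le,
      mul_nonneg (sq_nonneg p) ht.le]
  have hg : Integrable fun p : ℝ =>
      Real.exp (|q * x| + q^2*t/2 + (3*q^2/2+1)^2) * Real.exp (-p^2) := by
    have : Integrable fun p : ℝ => Real.exp (-1 * p^2) := integrable_exp_neg_mul_sq one_pos
    simpa using this.const_mul _
  exact hg.mono' (F_continuous_line t x q).aestronglyMeasurable
    (Filter.Eventually.of_forall hbd)

/-- vertical side integrals of the rectangle. -/
noncomputable def vert (t x a T : ℝ) : ℂ :=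
  ∫ y : ℝ in (0:ℝ)..a, Complex.I *
    (F t x (T + y * Complex.I) - F t x (-T + y * Complex.I))

lemma norm_F_vert_le (t x : ℝ) (ht : 0 < t) (a : ℝ) {T y p : ℝ} (hT : 0 ≤ T) (hy : |y| ≤ |a|)
    (hp : p ^ 2 = T ^ 2) :
    ‖F t x (p + y * Complex.I)‖ ≤
      Real.exp (|a| * |x| + a ^ 2 * t / 2 + 3 * a ^ 2 / 2 * T ^ 2 - T ^ 4 / 4) := by
  have hy2 : y ^ 2 ≤ a ^ 2 := by
    rw [← _root_.sq_abs y, ← _root_.sq_abs a]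
    exact pow_le_pow_left₀ (abs_nonneg y) hy 2
  have hyx : -(y * x) ≤ |a| * |x| := by
    calc -(y * x) ≤ |y * x| := neg_le_abs _
    _ = |y| * |x| := abs_mul _ _
    _ ≤ |a| * |x| := by gcongr
  have hp4 : p ^ 4 = T ^ 4 := by
    have : (p ^ 2) ^ 2 = (T ^ 2) ^ 2 := by rw [hp]
    calc p ^ 4 = (p ^ 2) ^ 2 := by ring
    _ = (T ^ 2) ^ 2 := this
    _ = T ^ 4 := by ring
  rw [norm_F t x p y]
  apply Real.exp_le_exp.2
  have hpy : p ^ 2 * y ^ 2 = T ^ 2 * y ^ 2 := by rw [hp]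
  nlinarith [hpy, hp, hp4, mul_le_mul_of_nonneg_left hy2 (by positivity : (0:ℝ) ≤ t / 2),
    mul_le_mul_of_nonneg_left hy2 (by positivity : (0:ℝ) ≤ 3 / 2 * T ^ 2),
    sq_nonneg (y ^ 2), mul_nonneg ht.le (sq_nonneg T)]

lemma vert_norm_le (t x : ℝ) (ht : 0 < t) (a : ℝ) {T : ℝ} (hT : 0 ≤ T) :
    ‖vert t x a T‖ ≤
      2 * Real.exp (|a| * |x| + a ^ 2 * t / 2 + 3 * a ^ 2 / 2 * T ^ 2 - T ^ 4 / 4) * |a| := by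
  apply (intervalIntegral.norm_integral_le_of_norm_le_const (C := 2 *
      Real.exp (|a| * |x| + a ^ 2 * t / 2 + 3 * a ^ 2 / 2 * T ^ 2 - T ^ 4 / 4)) ?_).trans
  · rw [sub_zero]
  · intro y hy
    have absy : |y| ≤ |a| := by
      rcases le_or_gt 0 a with h | h
      · rw [Set.uIoc_of_le h] at hy
        rw [_root_.abs_of_nonneg h, _root_.abs_of_pos hy.1]
        exact hy.2
      · rw [Set.uIoc_of_ge h.le] at hy
        rw [_root_.abs_of_neg h, _root_.abs_of_nonpos hy.2, neg_le_neg_iff]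
        exact hy.1.le
    rw [norm_mul, Complex.norm_I, one_mul, two_mul]
    refine (norm_sub_le _ _).trans (add_le_add ?_ ?_)
    · exact norm_F_vert_le t x ht a hT absy rfl
    · have := norm_F_vert_le t x ht a (T := T) (p := -T) hT absy (by ring)
      simpa using this

lemma tendsto_vert (t x : ℝ) (ht : 0 < t) (a : ℝ) :
    Tendsto (vert t x a) atTop (nhds 0) := by
  rw [tendsto_zero_iff_norm_tendsto_zero]
  refine tendsto_of_tendsto_of_tendsto_of_le_of_le' tendsto_const_nhds ?_
    (Eventually.of_forall fun _ => norm_nonneg _)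
    ((eventually_ge_atTop (0:ℝ)).mp
      (Eventually.of_forall fun T hT => vert_norm_le t x ht a hT))
  rw [show (0:ℝ) = 2 * 0 * |a| by ring]
  refine Tendsto.mul_const _ (Tendsto.const_mul _ ?_)
  apply Real.tendsto_exp_atBot.comp
  have h1 : Tendsto (fun T : ℝ => T ^ 2) atTop atTop :=
    tendsto_pow_atTop (by norm_num)
  have h2 : Tendsto (fun T : ℝ => 3 * a ^ 2 / 2 - T ^ 2 / 4) atTop atBot := by
    apply tendsto_atBot_add_const_left
    apply tendsto_neg_atTop_atBot.comp
    exact h1.atTop_div_const (by norm_num)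
  have h3 : Tendsto (fun T : ℝ =>
      |a| * |x| + a ^ 2 * t / 2 + T ^ 2 * (3 * a ^ 2 / 2 - T ^ 2 / 4)) atTop atBot :=
    tendsto_atBot_add_const_left _ _ (h1.atTop_mul_atBot₀ h2)
  exact h3.congr fun T => by ring

/-- Contour shift: moving the contour from `ℝ` to `ℝ + a*I`. -/
lemma integral_shift (t x : ℝ) (ht : 0 < t) (a : ℝ) :
    ∫ p : ℝ, F t x (p + a * Complex.I) = ∫ p : ℝ, F t x p := by
  have hInt0 : Integrable fun p : ℝ => F t x p := by
    have := integrable_F t x ht 0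
    refine this.congr (Eventually.of_forall fun p => by norm_num)
  have key : ∀ T : ℝ, (∫ p : ℝ in -T..T, F t x (p + a * Complex.I))
      = (∫ p : ℝ in -T..T, F t x p) + vert t x a T := by
    intro T
    have C := Complex.integral_boundary_rect_eq_zero_of_differentiableOn (F t x) (-T)
      (T + a * Complex.I) ((F_differentiable t x).differentiableOn)
    simp only [Complex.neg_im, Complex.ofReal_im, neg_zero, Complex.ofReal_zero, zero_mul,
      add_zero, Complex.neg_re, Complex.ofReal_re, Complex.add_re, Complex.mul_re, Complex.I_re,
      mul_zero, Complex.I_im, tsub_zero, Complex.add_im, Complex.mul_im, mul_one, zero_add,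
      smul_eq_mul, Complex.ofReal_neg] at C
    rw [sub_eq_zero] at C
    unfold vert
    rw [intervalIntegral.integral_const_mul, intervalIntegral.integral_sub]
    · rw [mul_sub]
      rw [← sub_eq_zero]
      rw [← sub_eq_zero] at C
      have h0 : ∀ p : ℝ, F t x (p + (0:ℝ) * Complex.I) = F t x p := fun p => by norm_num
      linear_combination (-C)
    · exact ((F_differentiable t x).continuous.comp (by fun_prop)).intervalIntegrable _ _
    · exact ((F_differentiable t x).continuous.comp (by fun_prop)).intervalIntegrable _ _
  have lim2 : Tendsto (fun T : ℝ => (∫ p : ℝ in -(id T)..(id T), F t x p) + vert t x a T) atTop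
      (nhds ((∫ p : ℝ, F t x p) + 0)) :=
    Tendsto.add (intervalIntegral_tendsto_integral hInt0 tendsto_neg_atTop_atBot tendsto_id)
      (tendsto_vert t x ht a)
  have lim1 : Tendsto (fun T : ℝ => ∫ p : ℝ in -(id T)..(id T), F t x (p + a * Complex.I)) atTop
      (nhds ((∫ p : ℝ, F t x p) + 0)) := by
    refine lim2.congr fun T => ?_
    simp only [id_eq]
    exact (key T).symm
  have lim0 := intervalIntegral_tendsto_integral (integrable_F t x ht a)
    tendsto_neg_atTop_atBot tendsto_id
  have := tendsto_nhds_unique lim0 lim1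
  rwa [add_zero] at this

end PearceyAux

/-- Exact rescaling identity relating `v` along the cusp curve to a
perturbed Airy integral. -/
theorem pearcey_rescaling_identity :
    ∀ t > (0 : ℝ), ∀ ξ : ℝ,
      (((3 * t) ^ ((1 : ℝ) / 6) : ℝ) : ℂ)
        * Complex.exp (((t ^ 2 / 12 - ξ * t ^ ((2 : ℝ) / 3) / 3 ^ ((1 : ℝ) / 3) : ℝ) : ℂ))
        * v t (-2 * (t / 3) ^ ((3 : ℝ) / 2) + ξ * (3 * t) ^ ((1 : ℝ) / 6))
      = (1 / (2 * Real.pi)) *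
          ∫ z : ℝ, Complex.exp (Complex.I * z * ξ + Complex.I * z ^ 3 / 3
            - z ^ 4 / (4 * ((3 * t) ^ ((2 : ℝ) / 3) : ℝ))) := by
  intro t ht ξ
  have h3 : (0:ℝ) < 3 := by norm_num
  set s : ℝ := t ^ ((1:ℝ)/6) with hs_def
  set u : ℝ := (3:ℝ) ^ ((1:ℝ)/6) with hu_def
  have hs : 0 < s := Real.rpow_pos_of_pos ht _
  have hu : 0 < u := Real.rpow_pos_of_pos h3 _
  have pow6 : ∀ (x : ℝ), 0 < x → ∀ n : ℕ, (x ^ ((1:ℝ)/6)) ^ n = x ^ ((n : ℝ)/6) := by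
    intro x hx n
    rw [← Real.rpow_natCast (x ^ ((1:ℝ)/6)) n, ← Real.rpow_mul hx.le]
    ring_nf
  have hs6 : s ^ 6 = t := by
    rw [hs_def, pow6 t ht 6, show ((6:ℕ) : ℝ)/6 = 1 by norm_num, Real.rpow_one]
  have hu6 : u ^ 6 = 3 := by
    rw [hu_def, pow6 3 h3 6, show ((6:ℕ) : ℝ)/6 = 1 by norm_num, Real.rpow_one]
  have e2 : t ^ ((2:ℝ)/3) = s ^ 4 := by
    rw [hs_def, pow6 t ht 4, show ((4:ℕ) : ℝ)/6 = (2:ℝ)/3 by norm_num]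
  have e3 : (3:ℝ) ^ ((1:ℝ)/3) = u ^ 2 := by
    rw [hu_def, pow6 3 h3 2, show ((2:ℕ) : ℝ)/6 = (1:ℝ)/3 by norm_num]
  have e4 : (t/3) ^ ((3:ℝ)/2) = s ^ 9 / u ^ 9 := by
    rw [Real.div_rpow ht.le h3.le, hs_def, hu_def, pow6 t ht 9, pow6 3 h3 9,
      show ((9:ℕ) : ℝ)/6 = (3:ℝ)/2 by norm_num]
  have e1 : (3*t) ^ ((1:ℝ)/6) = u * s := by
    rw [Real.mul_rpow h3.le ht.le, hs_def, hu_def]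
  have e5 : (3*t) ^ ((2:ℝ)/3) = u ^ 4 * s ^ 4 := by
    rw [Real.mul_rpow h3.le ht.le, e2, hu_def, pow6 3 h3 4,
      show ((4:ℕ) : ℝ)/6 = (2:ℝ)/3 by norm_num]
  rw [e1, e2, e3, e4, e5]
  set X : ℝ := -2 * (s ^ 9 / u ^ 9) + ξ * (u * s) with hX
  set a : ℝ := -(s ^ 3 / u ^ 3) with ha
  have hv : v t X = (1 / (2 * Real.pi)) * ∫ l : ℝ, PearceyAux.F t X l := rfl
  rw [hv, ← PearceyAux.integral_shift t X ht a]
  have hus : (0:ℝ) < u * s := mul_pos hu hs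
  have hscale : (∫ p : ℝ, PearceyAux.F t X (p + (a:ℝ) * Complex.I))
      = (((u*s)⁻¹ : ℝ) : ℂ) * ∫ z : ℝ, PearceyAux.F t X (((z/(u*s) : ℝ) : ℂ) + (a:ℝ) * Complex.I) := by
    have h := MeasureTheory.Measure.integral_comp_div
      (fun p : ℝ => PearceyAux.F t X ((p:ℂ) + (a:ℝ) * Complex.I)) (u*s)
    rw [abs_of_pos hus] at h
    rw [h, Complex.real_smul, ← mul_assoc, ← Complex.ofReal_mul, inv_mul_cancel₀ hus.ne',
      Complex.ofReal_one, one_mul]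
  rw [hscale]
  set K : ℝ := t ^ 2 / 12 - ξ * s ^ 4 / u ^ 2 with hK
  have hpt : ∀ z : ℝ, Complex.exp ((K:ℝ) : ℂ) *
      PearceyAux.F t X (((z/(u*s) : ℝ) : ℂ) + (a:ℝ) * Complex.I)
      = Complex.exp (Complex.I * z * ξ + Complex.I * z ^ 3 / 3
          - z ^ 4 / (4 * ((u ^ 4 * s ^ 4 : ℝ) : ℂ))) := by
    intro z
    rw [PearceyAux.F, ← Complex.exp_add]
    congr 1
    have htc : ((t:ℝ) : ℂ) = ((s:ℝ) : ℂ) ^ 6 := by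
      rw [← hs6]; push_cast; ring
    have h3c : ((3:ℝ) : ℂ) = ((u:ℝ) : ℂ) ^ 6 := by
      rw [← hu6]; push_cast; ring
    rw [hK, hX, ha]
    push_cast
    rw [htc, show (3:ℂ) = ((3:ℝ):ℂ) by norm_num, h3c]
    have hI : Complex.I ^ 2 = -1 := Complex.I_sq
    have hu0 : ((u:ℝ):ℂ) ≠ 0 := Complex.ofReal_ne_zero.2 hu.ne'
    have hs0 : ((s:ℝ):ℂ) ≠ 0 := Complex.ofReal_ne_zero.2 hs.ne'
    have hu6c : ((u:ℝ) : ℂ) ^ 6 = 3 := by rw [← h3c]; norm_num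
    have hsi : (s:ℂ) * (s:ℂ)⁻¹ = 1 := mul_inv_cancel₀ hs0
    have hui : (u:ℂ) * (u:ℂ)⁻¹ = 1 := mul_inv_cancel₀ hu0
    have h3ui : (3:ℂ) * (u:ℂ)⁻¹ = (u:ℂ)^5 := by
      rw [← hu6c]; field_simp
    linear_combination
      (-1*(s:ℂ)^4*(u:ℂ)*(u:ℂ)⁻¹^3*(ξ:ℂ) + (-3/2)*(s:ℂ)^6*(s:ℂ)⁻¹^2*(u:ℂ)⁻¹^8*(z:ℂ)^2 + 1*(s:ℂ)^9*(s:ℂ)⁻¹*(u:ℂ)⁻¹^10*(z:ℂ)*Complex.I + (-1/2)*(s:ℂ)^12*(u:ℂ)⁻¹^6 + (9/4)*(s:ℂ)^12*(u:ℂ)⁻¹^12 + (-1/4)*(s:ℂ)^12*(u:ℂ)⁻¹^12*Complex.I^2) * hI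
      + (1*(u:ℂ)⁻¹^6*(z:ℂ)^3*Complex.I + 1*(u:ℂ)*(u:ℂ)⁻¹*(z:ℂ)*(ξ:ℂ)*Complex.I + 1*(s:ℂ)*(s:ℂ)⁻¹*(u:ℂ)⁻¹^6*(z:ℂ)^3*Complex.I + 1*(s:ℂ)^2*(s:ℂ)⁻¹^2*(u:ℂ)⁻¹^6*(z:ℂ)^3*Complex.I + (-1/2)*(s:ℂ)^4*(u:ℂ)⁻¹^2*(z:ℂ)^2 + (3/2)*(s:ℂ)^4*(u:ℂ)⁻¹^8*(z:ℂ)^2 + (-1/2)*(s:ℂ)^5*(s:ℂ)⁻¹*(u:ℂ)⁻¹^2*(z:ℂ)^2 + (3/2)*(s:ℂ)^5*(s:ℂ)⁻¹*(u:ℂ)⁻¹^8*(z:ℂ)^2 + 1*(s:ℂ)^8*(u:ℂ)⁻¹^4*(z:ℂ)*Complex.I + -3*(s:ℂ)^8*(u:ℂ)⁻¹^10*(z:ℂ)*Complex.I) * hsi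
      + (1*(z:ℂ)*(ξ:ℂ)*Complex.I + 1*(s:ℂ)^4*(u:ℂ)⁻¹^2*(ξ:ℂ) + (1/2)*(s:ℂ)^4*(u:ℂ)⁻¹^2*(z:ℂ)^2 + (1/2)*(s:ℂ)^4*(u:ℂ)*(u:ℂ)⁻¹^3*(z:ℂ)^2 + (1/2)*(s:ℂ)^4*(u:ℂ)^2*(u:ℂ)⁻¹^4*(z:ℂ)^2 + (1/2)*(s:ℂ)^4*(u:ℂ)^3*(u:ℂ)⁻¹^5*(z:ℂ)^2 + (1/2)*(s:ℂ)^4*(u:ℂ)^4*(u:ℂ)⁻¹^6*(z:ℂ)^2 + -1*(s:ℂ)^8*(u:ℂ)⁻¹^4*(z:ℂ)*Complex.I + -1*(s:ℂ)^8*(u:ℂ)*(u:ℂ)⁻¹^5*(z:ℂ)*Complex.I + -1*(s:ℂ)^8*(u:ℂ)^2*(u:ℂ)⁻¹^6*(z:ℂ)*Complex.I + -1*(s:ℂ)^8*(u:ℂ)^3*(u:ℂ)⁻¹^7*(z:ℂ)*Complex.I + -1*(s:ℂ)^8*(u:ℂ)^4*(u:ℂ)⁻¹^8*(z:ℂ)*Complex.I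 + (-1/12)*(s:ℂ)^12 + (-3/4)*(s:ℂ)^12*(u:ℂ)⁻¹^6 + (-1/12)*(s:ℂ)^12*(u:ℂ)*(u:ℂ)⁻¹ + (-3/4)*(s:ℂ)^12*(u:ℂ)*(u:ℂ)⁻¹^7 + (-1/12)*(s:ℂ)^12*(u:ℂ)^2*(u:ℂ)⁻¹^2 + (-3/4)*(s:ℂ)^12*(u:ℂ)^2*(u:ℂ)⁻¹^8 + (-1/12)*(s:ℂ)^12*(u:ℂ)^3*(u:ℂ)⁻¹^3 + (-3/4)*(s:ℂ)^12*(u:ℂ)^3*(u:ℂ)⁻¹^9 + (-1/12)*(s:ℂ)^12*(u:ℂ)^4*(u:ℂ)⁻¹^4 + (-3/4)*(s:ℂ)^12*(u:ℂ)^4*(u:ℂ)⁻¹^10) * hui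
      + ((1/2)*(s:ℂ)^4*(u:ℂ)⁻¹^7*(z:ℂ)^2 + -1*(s:ℂ)^8*(u:ℂ)⁻¹^9*(z:ℂ)*Complex.I + (-1/12)*(s:ℂ)^12*(u:ℂ)⁻¹^5 + (-3/4)*(s:ℂ)^12*(u:ℂ)⁻¹^11) * h3ui
  calc (((u*s : ℝ)) : ℂ) * Complex.exp ((K:ℝ) : ℂ) *
      ((1 / (2 * ↑Real.pi)) * ((((u*s)⁻¹ : ℝ) : ℂ) *
        ∫ z : ℝ, PearceyAux.F t X (((z/(u*s) : ℝ) : ℂ) + (a:ℝ) * Complex.I)))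
      = (1 / (2 * ↑Real.pi)) * ∫ z : ℝ, Complex.exp ((K:ℝ) : ℂ) *
          PearceyAux.F t X (((z/(u*s) : ℝ) : ℂ) + (a:ℝ) * Complex.I) := by
        rw [MeasureTheory.integral_const_mul]
        have h2 : (((u*s : ℝ)) : ℂ) * (((u*s)⁻¹ : ℝ) : ℂ) = 1 := by
          rw [← Complex.ofReal_mul, mul_inv_cancel₀ hus.ne', Complex.ofReal_one]
        linear_combination (Complex.exp ((K:ℝ) : ℂ) * (1/(2*(Real.pi : ℂ))) *
          (∫ z : ℝ, PearceyAux.F t X (((z/(u*s) : ℝ) : ℂ) + (a:ℝ) * Complex.I))) * h2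
  _ = (1 / (2 * ↑Real.pi)) * ∫ z : ℝ, Complex.exp (Complex.I * z * ξ + Complex.I * z ^ 3 / 3
          - z ^ 4 / (4 * ((u ^ 4 * s ^ 4 : ℝ) : ℂ))) := by
        congr 1
        exact MeasureTheory.integral_congr_ae (Filter.Eventually.of_forall fun z => hpt z)
end
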